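/- Let ℓ and k be positive real numbers, let G be a finite simple graph, let φ : E(G) → (0,ℓ], and let x,y ∈ V(G). If the distance in (G,φ) between x and y is at most k, then the (unit-length) graph distance in (G,φ)^ℓ between x and y is at most ⌈2k/ℓ⌉. -/

import Mathlib

open scoped ENNReal

/-- The length of a walk in an edge-weighted graph: the sum of the weights of its edges. -/
def walkLen {V : Type} {G : SimpleGraph V} (w : Sym2 V → ℝ) {x y : V} (p : G.Walk x y) : ℝ :=
  (p.edges.map w).sum

/-- The distance between two vertices of an edge-weighted graph: the infimum of the lengths
of paths between them (`⊤` if there is no such path). -/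
noncomputable def wDist {V : Type} (G : SimpleGraph V) (w : Sym2 V → ℝ) (x y : V) : ℝ≥0∞ :=
  ⨅ q : {q : G.Walk x y // q.IsPath}, ENNReal.ofReal (walkLen w q.1)

lemma wDist_comm {V : Type} (G : SimpleGraph V) (w : Sym2 V → ℝ) (x y : V) :
    wDist G w x y = wDist G w y x := by
  have key : ∀ a b : V, wDist G w a b ≤ wDist G w b a := by
    intro a b
    refine le_iInf fun q => ?_
    refine iInf_le_of_le ⟨q.1.reverse, q.2.reverse⟩ ?_
    simp [walkLen, List.sum_reverse]
  exact le_antisymm (key x y) (key y x)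

/-- The power graph: two distinct vertices are adjacent iff their weighted distance
is at most `r`. -/
noncomputable def powerGraph {V : Type} (G : SimpleGraph V) (w : Sym2 V → ℝ) (r : ℝ) :
    SimpleGraph V where
  Adj x y := x ≠ y ∧ wDist G w x y ≤ ENNReal.ofReal r
  symm := ⟨by
    rintro x y ⟨hne, hle⟩
    exact ⟨hne.symm, by rwa [wDist_comm]⟩⟩
  loopless := ⟨fun x h => h.1 rfl⟩

/-- The unit-length (hop) distance in an unweighted graph. -/
noncomputable def hopDist {V : Type} (L : SimpleGraph V) (x y : V) : ℝ≥0∞ :=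
  ⨅ q : L.Walk x y, (q.length : ℝ≥0∞)

/-- Same-colour adjacency within a vertex set `A`. -/
def colorGraph {V : Type} (K : SimpleGraph V) (A : Set V) {m : ℕ} (c : V → Fin m) :
    SimpleGraph V where
  Adj x y := K.Adj x y ∧ x ∈ A ∧ y ∈ A ∧ c x = c y
  symm := ⟨by
    rintro x y ⟨h, hx, hy, hc⟩
    exact ⟨h.symm, hy, hx, hc.symm⟩⟩
  loopless := ⟨fun x h => K.loopless.irrefl x h.1⟩

/-- The colouring `c` of the subgraph of `K` induced on `A` has weak diameter, measured by the
hop distance of `L`, at most `N`: any two vertices of a monochromatic component of `K ↾ A` are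
at hop distance at most `N` in `L`. -/
def HasWeakDiamLE {V : Type} (K : SimpleGraph V) (A : Set V) (L : SimpleGraph V) {m : ℕ}
    (c : V → Fin m) (N : ℝ) : Prop :=
  ∀ x ∈ A, ∀ y ∈ A, (colorGraph K A c).Reachable x y → hopDist L x y ≤ ENNReal.ofReal N

/-- `nbhd G w r S`: vertices joined to `S` by a path of weighted length at most `r`. -/
def nbhd {V : Type} (G : SimpleGraph V) (w : Sym2 V → ℝ) (r : ℝ) (S : Set V) : Set V :=
  {v | ∃ s ∈ S, ∃ q : G.Walk v s, q.IsPath ∧ walkLen w q ≤ r}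

/-- Deleting a set of vertices (keeping them as isolated vertices of the ambient type). -/
def delVerts {V : Type} (G : SimpleGraph V) (Z : Set V) : SimpleGraph V where
  Adj x y := G.Adj x y ∧ x ∉ Z ∧ y ∉ Z
  symm := ⟨by
    rintro x y ⟨h, hx, hy⟩
    exact ⟨h.symm, hy, hx⟩⟩
  loopless := ⟨fun x h => G.loopless.irrefl x h.1⟩

/-- A weighted graph: a finite simple graph together with positive edge weights. -/
structure WGraph : Type 1 where
  V : Type
  fin : Finite V
  G : SimpleGraph V
  w : Sym2 V → ℝ
  pos : ∀ e ∈ G.edgeSet, 0 < w e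

/-- The extended metric on the vertex set of a weighted graph. -/
noncomputable def WGraph.dist (W : WGraph) : W.V → W.V → ℝ≥0∞ := wDist W.G W.w

/-- All edge weights lie in `(0, ℓ]`. -/
def WGraph.IsBounded (W : WGraph) (ℓ : ℝ) : Prop := ∀ e ∈ W.G.edgeSet, W.w e ≤ ℓ

/-- `f` is an `n`-dimensional control function for the extended metric `d`. -/
def IsControlOn {X : Type} (d : X → X → ℝ≥0∞) (n : ℕ) (f : ℝ → ℝ) : Prop :=
  ∀ r : ℝ, 0 < r → ∃ U : Fin (n + 1) → Set (Set X),
    (∀ x : X, ∃ i, ∃ s ∈ U i, x ∈ s) ∧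
    (∀ i, ∀ s ∈ U i, ∀ t ∈ U i, s ≠ t → ∀ x ∈ s, ∀ y ∈ t, ENNReal.ofReal r < d x y) ∧
    (∀ i, ∀ s ∈ U i, ∀ x ∈ s, ∀ y ∈ s, d x y ≤ ENNReal.ofReal (f r))

/-- The asymptotic dimension of a class of weighted graphs is at most `n`. -/
def asdimLE (F : Set WGraph) (n : ℕ) : Prop :=
  ∃ f : ℝ → ℝ, (∀ x, 0 < x → 0 < f x) ∧ ∀ W ∈ F, IsControlOn W.dist n f

/-- The Assouad–Nagata dimension of a class of weighted graphs is at most `n`: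
some dilation is a common `n`-dimensional control function. -/
def ANdimLE (F : Set WGraph) (n : ℕ) : Prop :=
  ∃ (f : ℝ → ℝ) (c : ℝ), 0 < c ∧ (∀ x, 0 < x → 0 < f x) ∧ (∀ x, 0 < x → f x ≤ c * x) ∧
    ∀ W ∈ F, IsControlOn W.dist n f

/-- `H` is a minor of `G`: there are pairwise disjoint nonempty connected branch sets in `G`,
one for each vertex of `H`, with branch sets of adjacent vertices joined by an edge. -/
def IsMinorOf {α β : Type} (H : SimpleGraph β) (G : SimpleGraph α) : Prop :=
  ∃ B : β → Set α,
    (∀ h, (B h).Nonempty) ∧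
    (∀ h h', h ≠ h' → Disjoint (B h) (B h')) ∧
    (∀ h, (G.induce (B h)).Connected) ∧
    (∀ h h', H.Adj h h' → ∃ a ∈ B h, ∃ b ∈ B h', G.Adj a b)

/-! Follow a shortest path greedily: one hop of `(G,φ)^ℓ` reaches the last vertex of the path
within weighted distance `ℓ`, a second hop crosses the next edge (of weight at most `ℓ`), and
together they advance more than `ℓ` along the path. So every `ℓ` of length costs at most two
hops. -/

open SimpleGraph

section WalkLength

variable {V : Type} {G : SimpleGraph V} (w : Sym2 V → ℝ)

@[simp] lemma walkLen_nil {x : V} : walkLen w (Walk.nil : G.Walk x x) = 0 := by simp [walkLen]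

@[simp] lemma walkLen_cons {x y z : V} (h : G.Adj x y) (p : G.Walk y z) :
    walkLen w (Walk.cons h p) = w s(x, y) + walkLen w p := by simp [walkLen]

@[simp] lemma walkLen_append {x y z : V} (p : G.Walk x y) (q : G.Walk y z) :
    walkLen w (p.append q) = walkLen w p + walkLen w q := by simp [walkLen]

lemma walkLen_nonneg {w} (hw : ∀ e ∈ G.edgeSet, 0 ≤ w e) {x y : V} (p : G.Walk x y) :
    0 ≤ walkLen w p :=
  List.sum_nonneg fun a ha => by
    obtain ⟨e, he, rfl⟩ := List.mem_map.1 ha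
    exact hw e (p.edges_subset_edgeSet he)

lemma walkLen_pos_of_ne {w} (hw : ∀ e ∈ G.edgeSet, 0 < w e) {x y : V} (hxy : x ≠ y)
    (p : G.Walk x y) : 0 < walkLen w p := by
  cases p with
  | nil => exact absurd rfl hxy
  | cons h p =>
    rw [walkLen_cons]
    exact add_pos_of_pos_of_nonneg (hw _ (G.mem_edgeSet.2 h))
      (walkLen_nonneg (fun e he => (hw e he).le) p)

lemma walkLen_le_or_exists_split {x y : V} (p : G.Walk x y) {r : ℝ} (hr : 0 ≤ r) :
    walkLen w p ≤ r ∨ ∃ (z z' : V) (p₁ : G.Walk x z) (h : G.Adj z z') (p₂ : G.Walk z' y),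
      p = p₁.append (Walk.cons h p₂) ∧ walkLen w p₁ ≤ r ∧ r < walkLen w p₁ + w s(z, z') := by
  induction p generalizing r with
  | nil => exact Or.inl (by simpa using hr)
  | @cons a b c h p ih =>
    by_cases hab : w s(a, b) ≤ r
    · rcases ih (r := r - w s(a, b)) (sub_nonneg.2 hab) with hp | ⟨z, z', p₁, e, p₂, rfl, h₁, h₂⟩
      · left; rw [walkLen_cons]; linarith
      · right
        refine ⟨z, z', Walk.cons h p₁, e, p₂, rfl, ?_, ?_⟩ <;> rw [walkLen_cons] <;> linarith
    · exact Or.inr ⟨a, b, Walk.nil, h, p, rfl, by simpa using hr, by simpa using not_le.1 hab⟩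

end WalkLength

section PowerGraph

variable {V : Type} {G : SimpleGraph V} {w : Sym2 V → ℝ}

lemma wDist_le_walkLen {x y : V} {p : G.Walk x y} (hp : p.IsPath) :
    wDist G w x y ≤ ENNReal.ofReal (walkLen w p) :=
  iInf_le_of_le ⟨p, hp⟩ le_rfl

lemma exists_isPath_wDist_eq [Finite V] {x y : V} (h : wDist G w x y ≠ ⊤) :
    ∃ p : G.Walk x y, p.IsPath ∧ wDist G w x y = ENNReal.ofReal (walkLen w p) := by
  classical
  have := Fintype.ofFinite V
  have : Nonempty {p : G.Walk x y // p.IsPath} := by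
    by_contra hempty
    rw [not_nonempty_iff] at hempty
    exact h (iInf_of_empty _)
  obtain ⟨⟨p, hp⟩, hpd⟩ := exists_eq_ciInf_of_finite
    (f := fun q : {q : G.Walk x y // q.IsPath} => ENNReal.ofReal (walkLen w q.1))
  exact ⟨p, hp, hpd.symm⟩

lemma powerGraph_adj_of_isPath {r : ℝ} {x y : V} (hxy : x ≠ y) {p : G.Walk x y}
    (hp : p.IsPath) (hpr : walkLen w p ≤ r) : (powerGraph G w r).Adj x y :=
  ⟨hxy, (wDist_le_walkLen hp).trans (ENNReal.ofReal_le_ofReal hpr)⟩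

lemma exists_powerGraph_walk_length_le_one {r : ℝ} {x y : V} {p : G.Walk x y}
    (hp : p.IsPath) (hpr : walkLen w p ≤ r) : ∃ q : (powerGraph G w r).Walk x y, q.length ≤ 1 := by
  by_cases hxy : x = y
  · subst hxy
    exact ⟨Walk.nil, zero_le_one⟩
  · exact ⟨(powerGraph_adj_of_isPath hxy hp hpr).toWalk, by simp⟩

theorem exists_powerGraph_walk_length_le_ceil {ℓ : ℝ} (hℓ : 0 < ℓ)
    (hpos : ∀ e ∈ G.edgeSet, 0 < w e) (hb : ∀ e ∈ G.edgeSet, w e ≤ ℓ) {x y : V}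
    (p : G.Walk x y) (hp : p.IsPath) :
    ∃ q : (powerGraph G w ℓ).Walk x y, q.length ≤ ⌈2 * walkLen w p / ℓ⌉₊ := by
  by_cases hxy : x = y
  · subst hxy
    exact ⟨Walk.nil, Nat.zero_le _⟩
  rcases walkLen_le_or_exists_split w p hℓ.le with hpℓ | ⟨z, z', p₁, e, p₂, rfl, h₁, h₂⟩
  · have hp0 := walkLen_pos_of_ne hpos hxy p
    exact ⟨(powerGraph_adj_of_isPath hxy hp hpℓ).toWalk,
      by simpa using Nat.one_le_ceil_iff.2 (by positivity)⟩
  · obtain ⟨q₁, hq₁⟩ := exists_powerGraph_walk_length_le_one hp.of_append_left h₁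
    have he : (powerGraph G w ℓ).Adj z z' :=
      powerGraph_adj_of_isPath e.ne (p := e.toWalk) (by simp [e.ne])
        (by simpa using hb _ (G.mem_edgeSet.2 e))
    obtain ⟨q₂, hq₂⟩ :=
      exists_powerGraph_walk_length_le_ceil hℓ hpos hb p₂ hp.of_append_right.of_cons
    refine ⟨q₁.append (Walk.cons he q₂), ?_⟩
    have hp₂ : 0 ≤ 2 * walkLen w p₂ / ℓ :=
      div_nonneg (mul_nonneg zero_le_two (walkLen_nonneg (fun e he => (hpos e he).le) p₂)) hℓ.le
    have hgain : 2 * walkLen w p₂ / ℓ + 2 ≤ 2 * walkLen w (p₁.append (Walk.cons e p₂)) / ℓ := by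
      rw [walkLen_append, walkLen_cons, div_add' _ _ _ hℓ.ne', div_le_div_iff_of_pos_right hℓ]
      linarith
    calc (q₁.append (Walk.cons he q₂)).length ≤ ⌈2 * walkLen w p₂ / ℓ⌉₊ + 2 := by
          simp only [Walk.length_append, Walk.length_cons]; omega
      _ = ⌈2 * walkLen w p₂ / ℓ + 2⌉₊ := by exact_mod_cast (Nat.ceil_add_natCast hp₂ 2).symm
      _ ≤ _ := Nat.ceil_le_ceil hgain
termination_by p.length
decreasing_by subst_vars; simp only [Walk.length_append, Walk.length_cons]; omega

end PowerGraph

theorem dist_original_power_general (ℓ k : ℝ) (hℓ : 0 < ℓ) (W : WGraph)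
    (hb : W.IsBounded ℓ) (x y : W.V)
    (hd : wDist W.G W.w x y ≤ ENNReal.ofReal k) :
    hopDist (powerGraph W.G W.w ℓ) x y ≤ (⌈2 * k / ℓ⌉₊ : ℝ≥0∞) := by
  have := W.fin
  obtain ⟨p, hp, hpd⟩ := exists_isPath_wDist_eq (hd.trans_lt ENNReal.ofReal_lt_top).ne
  obtain ⟨q, hq⟩ := exists_powerGraph_walk_length_le_ceil hℓ W.pos hb p hp
  have hceil : ⌈2 * walkLen W.w p / ℓ⌉₊ ≤ ⌈2 * k / ℓ⌉₊ := by
    rcases ENNReal.ofReal_le_ofReal_iff'.1 (hpd ▸ hd) with hpk | hp0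
    · gcongr
    · rw [Nat.ceil_eq_zero.2 (div_nonpos_of_nonpos_of_nonneg (by linarith) hℓ.le)]
      exact Nat.zero_le _
  exact (iInf_le _ q).trans (by exact_mod_cast hq.trans hceil)

/-- Theorem (Lemma `dist_original_power`): if all weights of `(G,φ)` lie in `(0,ℓ]` and the
distance in `(G,φ)` between `x` and `y` is at most `k`, then the graph distance in `(G,φ)^ℓ`
between `x` and `y` is at most `⌈2k/ℓ⌉`. -/
theorem dist_original_power (ℓ k : ℝ) (hℓ : 0 < ℓ) (hk : 0 < k) (W : WGraph)
    (hb : W.IsBounded ℓ) (x y : W.V)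
    (hd : wDist W.G W.w x y ≤ ENNReal.ofReal k) :
    hopDist (powerGraph W.G W.w ℓ) x y ≤ (⌈2 * k / ℓ⌉₊ : ℝ≥0∞) :=
  dist_original_power_general ℓ k hℓ W hb x y hd
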